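/- Let W denote the set of finite words over the alphabet {0,1}, and for an integer k ≥ 1 let A_k be the finite graph whose vertex set is {(u,v) ∈ W × W : k−1 ≤ |u|+|v| ≤ k} (|w| denoting the length of the word w), with an edge between (u,v) and (u',v') whenever either v = v' and u' is obtained from u by appending one letter, or u = u' and v' is obtained from v by appending one letter. Then there exists a constant C > 0 such that for every k ≥ 1 and every subset S of the vertex set of A_k with the property that every connected component of the subgraph of A_k induced on the vertices not in S has at most (15/16)·#V(A_k) vertices, one has #S ≥ C·2^k. -/

import Mathlib

open Set

/-- The vertex set of the annulus `A_k` of radii `{k−1, k}` in the product of two rooted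
infinite binary trees: pairs of binary words whose lengths sum to `k−1` or `k`. -/
def AnnV (k : ℕ) : Type :=
  {p : List Bool × List Bool // k - 1 ≤ p.1.length + p.2.length ∧ p.1.length + p.2.length ≤ k}

/-- One-step relation in the product of two rooted binary trees: append one letter to one
of the two coordinates. -/
def AnnRel (a b : List Bool × List Bool) : Prop :=
  (a.2 = b.2 ∧ ∃ x : Bool, b.1 = a.1 ++ [x]) ∨ (a.1 = b.1 ∧ ∃ x : Bool, b.2 = a.2 ++ [x])

/-- The annulus graph `A_k`. -/
def annGraph (k : ℕ) : SimpleGraph (AnnV k) :=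
  SimpleGraph.fromRel (fun a b => AnnRel a.1 b.1)

/-- `u` and `v` lie in the same connected component of the subgraph of `A_k` induced on the
complement of `S`: they are joined by a walk avoiding `S`. -/
def ReachAvoid {k : ℕ} (S : Set (AnnV k)) (u v : AnnV k) : Prop :=
  ∃ p : (annGraph k).Walk u v, ∀ w ∈ p.support, w ∉ S
-- ============ raw pairs ============
abbrev P2 := List Bool × List Bool

def InAnn (k : ℕ) (p : P2) : Prop :=
  k - 1 ≤ p.1.length + p.2.length ∧ p.1.length + p.2.length ≤ k

/-- loose step relation: equal or one-letter extension either way -/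
def LRel (a b : P2) : Prop := a = b ∨ AnnRel a b ∨ AnnRel b a

lemma LRel.refl (a : P2) : LRel a a := Or.inl rfl

/-- transfer letters `c` (in order) onto the end of the second coordinate, deleting
from the end of the first coordinate -/
def tr12 : List Bool → P2 → List P2
  | [], p => [p]
  | x :: c, p => p :: (p.1.dropLast, p.2) :: tr12 c (p.1.dropLast, p.2 ++ [x])

/-- transfer letters `c` (in order) onto the end of the first coordinate, deleting
from the end of the second coordinate -/
def tr21 : List Bool → P2 → List P2
  | [], p => [p]
  | x :: c, p => p :: (p.1, p.2.dropLast) :: tr21 c (p.1 ++ [x], p.2.dropLast)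

lemma tr12_ne_nil (c : List Bool) (p : P2) : tr12 c p ≠ [] := by
  cases c <;> simp [tr12]

lemma tr21_ne_nil (c : List Bool) (p : P2) : tr21 c p ≠ [] := by
  cases c <;> simp [tr21]

lemma head?_tr12 (c : List Bool) (p : P2) : (tr12 c p).head? = some p := by
  cases c <;> simp [tr12]

lemma head?_tr21 (c : List Bool) (p : P2) : (tr21 c p).head? = some p := by
  cases c <;> simp [tr21]

lemma getLast?_cons_ne {α : Type*} (a : α) (l : List α) (h : l ≠ []) :
    (a :: l).getLast? = l.getLast? := by
  cases l with
  | nil => exact absurd rfl h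
  | cons b t => exact List.getLast?_cons_cons

lemma getLast?_tr12 : ∀ (c : List Bool) (p : P2), c.length ≤ p.1.length →
    (tr12 c p).getLast? = some (p.1.take (p.1.length - c.length), p.2 ++ c)
  | [], p, _ => by simp [tr12]
  | x :: c, p, h => by
    have hlen : c.length ≤ p.1.dropLast.length := by
      simp only [List.length_dropLast]; simp at h; omega
    rw [tr12, getLast?_cons_ne _ _ (by simp [tr12_ne_nil]),
      getLast?_cons_ne _ _ (tr12_ne_nil _ _),
      getLast?_tr12 c _ hlen]
    congr 2
    · rw [List.dropLast_eq_take, List.take_take]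
      congr 1
      simp only [List.length_dropLast] at hlen
      simp only [List.length_take, List.length_dropLast, List.length_cons, Nat.min_def]
      split_ifs <;> omega
    · simp

lemma getLast?_tr21 : ∀ (c : List Bool) (p : P2), c.length ≤ p.2.length →
    (tr21 c p).getLast? = some (p.1 ++ c, p.2.take (p.2.length - c.length))
  | [], p, _ => by simp [tr21]
  | x :: c, p, h => by
    have hlen : c.length ≤ p.2.dropLast.length := by
      simp only [List.length_dropLast]; simp at h; omega
    rw [tr21, getLast?_cons_ne _ _ (by simp [tr21_ne_nil]),
      getLast?_cons_ne _ _ (tr21_ne_nil _ _),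
      getLast?_tr21 c _ hlen]
    congr 2
    · simp
    · rw [List.dropLast_eq_take, List.take_take]
      congr 1
      simp only [List.length_dropLast] at hlen
      simp only [List.length_take, List.length_dropLast, List.length_cons, Nat.min_def]
      split_ifs <;> omega

lemma AnnRel_ne {a b : P2} (h : AnnRel a b) : a ≠ b := by
  rcases h with ⟨h1, x, h2⟩ | ⟨h1, x, h2⟩ <;>
  · intro he
    subst he
    simpa using congrArg List.length h2

lemma chain'_tr12 : ∀ (c : List Bool) (p : P2), c.length ≤ p.1.length →
    List.Chain' LRel (tr12 c p)
  | [], p, _ => by simp [tr12]; exact List.IsChain.singleton _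
  | x :: c, p, h => by
    have hne : p.1 ≠ [] := by intro h0; rw [h0] at h; simp at h
    rw [tr12]
    refine List.isChain_cons_cons.mpr ⟨Or.inr (Or.inr (Or.inl ⟨rfl, p.1.getLast hne, (List.dropLast_append_getLast hne).symm⟩)), ?_⟩
    refine (List.isChain_cons).mpr ⟨?_, chain'_tr12 c _ (by simp [List.length_dropLast]; simp at h; omega)⟩
    intro y hy
    rw [head?_tr12, Option.mem_def, Option.some.injEq] at hy
    subst hy
    exact Or.inr (Or.inl (Or.inr ⟨rfl, x, rfl⟩))

lemma chain'_tr21 : ∀ (c : List Bool) (p : P2), c.length ≤ p.2.length →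
    List.Chain' LRel (tr21 c p)
  | [], p, _ => by simp [tr21]; exact List.IsChain.singleton _
  | x :: c, p, h => by
    have hne : p.2 ≠ [] := by intro h0; rw [h0] at h; simp at h
    rw [tr21]
    refine List.isChain_cons_cons.mpr ⟨Or.inr (Or.inr (Or.inr ⟨rfl, p.2.getLast hne, (List.dropLast_append_getLast hne).symm⟩)), ?_⟩
    refine (List.isChain_cons).mpr ⟨?_, chain'_tr21 c _ (by simp [List.length_dropLast]; simp at h; omega)⟩
    intro y hy
    rw [head?_tr21, Option.mem_def, Option.some.injEq] at hy
    subst hy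
    exact Or.inr (Or.inl (Or.inl ⟨rfl, x, rfl⟩))

lemma len_tr12 : ∀ (c : List Bool) (p : P2), c.length ≤ p.1.length →
    ∀ w ∈ tr12 c p, w.1.length + w.2.length = p.1.length + p.2.length ∨
      w.1.length + w.2.length + 1 = p.1.length + p.2.length
  | [], p, _ => by simp [tr12]
  | x :: c, p, h => by
    have hne : p.1 ≠ [] := by intro h0; rw [h0] at h; simp at h
    have h1 : p.1.dropLast.length + 1 = p.1.length := by
      rw [List.length_dropLast]
      have := List.length_pos_iff.mpr hne; omega
    intro w hw
    rw [tr12] at hw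
    simp only [List.mem_cons] at hw
    rcases hw with hw | hw | hw
    · subst hw; left; rfl
    · subst hw; right; simp only [List.length_dropLast]; omega
    · rcases len_tr12 c _ (by simp [List.length_dropLast]; simp at h; omega) w hw with h' | h' <;>
        simp only [List.length_append, List.length_cons, List.length_nil] at h' <;> omega

lemma len_tr21 : ∀ (c : List Bool) (p : P2), c.length ≤ p.2.length →
    ∀ w ∈ tr21 c p, w.1.length + w.2.length = p.1.length + p.2.length ∨
      w.1.length + w.2.length + 1 = p.1.length + p.2.length
  | [], p, _ => by simp [tr21]
  | x :: c, p, h => by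
    have hne : p.2 ≠ [] := by intro h0; rw [h0] at h; simp at h
    have h1 : p.2.dropLast.length + 1 = p.2.length := by
      rw [List.length_dropLast]
      have := List.length_pos_iff.mpr hne; omega
    intro w hw
    rw [tr21] at hw
    simp only [List.mem_cons] at hw
    rcases hw with hw | hw | hw
    · subst hw; left; rfl
    · subst hw; right; simp only [List.length_dropLast]; omega
    · rcases len_tr21 c _ (by simp [List.length_dropLast]; simp at h; omega) w hw with h' | h' <;>
        simp only [List.length_append, List.length_cons, List.length_nil] at h' <;> omega

/-- decoder for phase-A states -/
def decA (pr : P2) (m : ℕ) (t x : Bool) : P2 :=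
  ((if t then pr.1 else pr.1 ++ [x]) ++ (pr.2.drop m).reverse, pr.2.take m)

lemma decode_A : ∀ (c u v : List Bool) (pr : P2), c = u.reverse →
    pr ∈ tr12 c (u, v) → ∃ t x, (u, v) = decA pr v.length t x
  | [], u, v, pr, hc, hm => by
    have hu : u = [] := by simpa using congrArg List.reverse hc
    subst hu
    simp only [tr12, List.mem_singleton] at hm
    subst hm
    exact ⟨true, true, by simp [decA]⟩
  | y :: c, u, v, pr, hc, hm => by
    have hu : u = c.reverse ++ [y] := by
      have := congrArg List.reverse hc
      simpa using this.symm
    have hdl : u.dropLast = c.reverse := by rw [hu, List.dropLast_concat]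
    have hcrev : c = u.dropLast.reverse := by rw [hdl]; simp
    rw [tr12] at hm
    simp only [List.mem_cons] at hm
    rcases hm with hm | hm | hm
    · subst hm
      exact ⟨true, true, by simp [decA]⟩
    · subst hm
      refine ⟨false, y, ?_⟩
      simp only [decA, Bool.false_eq_true, if_false, List.drop_length, List.take_length,
        List.reverse_nil, List.append_nil]
      rw [Prod.mk.injEq]
      refine ⟨?_, rfl⟩
      rw [hdl, ← hu]
    · obtain ⟨t, x, heq⟩ := decode_A c u.dropLast (v ++ [y]) pr hcrev hm
      refine ⟨t, x, ?_⟩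
      set u1 := if t then pr.1 else pr.1 ++ [x] with hu1
      have h1 : u.dropLast = u1 ++ (pr.2.drop (v.length + 1)).reverse := by
        have := congrArg Prod.fst heq
        simpa [decA, ← hu1] using this
      have h2 : v ++ [y] = pr.2.take (v.length + 1) := by
        have := congrArg Prod.snd heq
        simpa [decA] using this
      have hlen : v.length + 1 ≤ pr.2.length := by
        have := congrArg List.length h2
        simp only [List.length_append, List.length_take, List.length_cons,
          List.length_nil] at this
        omega
      have hsplit : pr.2 = (v ++ [y]) ++ pr.2.drop (v.length + 1) := by
        conv_lhs => rw [← List.take_append_drop (v.length + 1) pr.2]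
        rw [← h2]
      have htake : pr.2.take v.length = v := by
        conv_lhs => rw [hsplit]
        rw [List.append_assoc, List.take_left' rfl]
      have hdrop : pr.2.drop v.length = y :: pr.2.drop (v.length + 1) := by
        conv_lhs => rw [hsplit]
        rw [List.append_assoc, List.drop_left' rfl]
        simp
      simp only [decA, ← hu1, htake, hdrop]
      rw [Prod.mk.injEq]
      refine ⟨?_, rfl⟩
      rw [List.reverse_cons, ← List.append_assoc, ← h1, hdl]
      exact hu

/-- decoder for phase-C states -/
def decC (pr : P2) (m : ℕ) (t x : Bool) : P2 :=
  ((if t then pr.1 else pr.1 ++ [x]).take m, pr.2 ++ ((if t then pr.1 else pr.1 ++ [x]).drop m).reverse)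

lemma decode_C : ∀ (c u v : List Bool) (pr : P2) (T : List Bool), u = T ++ c.reverse →
    pr ∈ tr12 c (u, v) → ∃ t x, (T, v ++ c) = decC pr T.length t x
  | [], u, v, pr, T, hc, hm => by
    simp only [List.reverse_nil, List.append_nil] at hc
    subst hc
    simp only [tr12, List.mem_singleton] at hm
    subst hm
    exact ⟨true, true, by simp [decC]⟩
  | y :: c, u, v, pr, T, hc, hm => by
    have hu : u = T ++ (c.reverse ++ [y]) := by rw [hc]; simp
    have hdl : u.dropLast = T ++ c.reverse := by
      rw [hu, ← List.append_assoc, List.dropLast_concat]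
    rw [tr12] at hm
    simp only [List.mem_cons] at hm
    rcases hm with hm | hm | hm
    · subst hm
      refine ⟨true, true, ?_⟩
      simp only [decC, if_pos]
      rw [Prod.mk.injEq]
      constructor
      · rw [hu, List.take_left' rfl]
      · rw [hu, List.drop_left' rfl]
        simp
    · subst hm
      refine ⟨false, y, ?_⟩
      simp only [decC, Bool.false_eq_true, if_false]
      have hres : u.dropLast ++ [y] = u := by
        rw [hdl, List.append_assoc, ← hu]
      rw [Prod.mk.injEq]
      constructor
      · rw [hres, hu, List.take_left' rfl]
      · rw [hres, hu, List.drop_left' rfl]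
        simp
    · obtain ⟨t, x, heq⟩ := decode_C c u.dropLast (v ++ [y]) pr T hdl hm
      refine ⟨t, x, ?_⟩
      rw [← heq]
      simp

/-- decoder for phase-B states -/
lemma decode_B : ∀ (c : List Bool) (p z : List Bool) (pr : P2) (zi : List Bool), z <+: zi →
    pr ∈ tr21 c (p, z) → pr.1 <+: (p ++ c) ∧ pr.2 <+: zi
  | [], p, z, pr, zi, hz, hm => by
    simp only [tr21, List.mem_singleton] at hm
    subst hm
    exact ⟨by simp, hz⟩
  | y :: c, p, z, pr, zi, hz, hm => by
    rw [tr21] at hm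
    simp only [List.mem_cons] at hm
    rcases hm with hm | hm | hm
    · subst hm
      exact ⟨List.prefix_append _ _, hz⟩
    · subst hm
      exact ⟨List.prefix_append _ _, (List.dropLast_prefix z).trans hz⟩
    · have := decode_B c (p ++ [y]) z.dropLast pr zi ((List.dropLast_prefix z).trans hz) hm
      refine ⟨?_, this.2⟩
      have h := this.1
      rwa [List.append_assoc] at h

def padk (k : ℕ) (p : P2) : P2 :=
  if p.1.length + p.2.length = k then p else (p.1, p.2 ++ [false])

def zwd (k : ℕ) (a : P2) : List Bool := (padk k a).2 ++ (padk k a).1.reverse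
def mwd (k : ℕ) (b : P2) : List Bool := (padk k b).1 ++ (padk k b).2.reverse

def partA (k : ℕ) (a : P2) : List P2 := a :: tr12 (padk k a).1.reverse (padk k a)
def partB (k : ℕ) (a b : P2) : List P2 := tr21 (mwd k b) ([], zwd k a)
def partC (k : ℕ) (b : P2) : List P2 := tr12 (padk k b).2 (mwd k b, []) ++ [b]

def route (k : ℕ) (a b : P2) : List P2 := partA k a ++ partB k a b ++ partC k b

lemma padk_len {k : ℕ} {p : P2} (hp : InAnn k p) :
    (padk k p).1.length + (padk k p).2.length = k := by
  obtain ⟨h1, h2⟩ := hp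
  unfold padk
  split_ifs with h
  · exact h
  · simp only [List.length_append, List.length_cons, List.length_nil]
    omega

lemma LRel_padk (k : ℕ) (p : P2) : LRel p (padk k p) := by
  unfold padk
  split_ifs with h
  · exact Or.inl rfl
  · exact Or.inr (Or.inl (Or.inr ⟨rfl, false, rfl⟩))

lemma LRel_padk' (k : ℕ) (p : P2) : LRel (padk k p) p := by
  unfold padk
  split_ifs with h
  · exact Or.inl rfl
  · exact Or.inr (Or.inr (Or.inr ⟨rfl, false, rfl⟩))

lemma zwd_len {k : ℕ} {a : P2} (ha : InAnn k a) : (zwd k a).length = k := by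
  simp only [zwd, List.length_append, List.length_reverse]
  have := padk_len ha; omega

lemma mwd_len {k : ℕ} {b : P2} (hb : InAnn k b) : (mwd k b).length = k := by
  simp only [mwd, List.length_append, List.length_reverse]
  have := padk_len hb; omega

lemma head?_append_ne {α : Type*} (l l' : List α) (h : l ≠ []) :
    (l ++ l').head? = l.head? := by
  cases l with
  | nil => exact absurd rfl h
  | cons a t => simp

lemma getLast?_append_ne {α : Type*} (l l' : List α) (h : l' ≠ []) :
    (l ++ l').getLast? = l'.getLast? := by
  induction l with
  | nil => simp
  | cons a t ih =>
    rw [List.cons_append, getLast?_cons_ne _ _ (by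
      intro h0
      exact h (List.append_eq_nil_iff.mp h0).2), ih]

lemma partA_getLast? {k : ℕ} {a : P2} (ha : InAnn k a) :
    (partA k a).getLast? = some ([], zwd k a) := by
  rw [partA, getLast?_cons_ne _ _ (tr12_ne_nil _ _),
    getLast?_tr12 _ _ (by simp)]
  simp [zwd]

lemma partB_getLast? {k : ℕ} {a b : P2} (ha : InAnn k a) (hb : InAnn k b) :
    (partB k a b).getLast? = some (mwd k b, []) := by
  rw [partB, getLast?_tr21 _ _ (by simp [mwd_len hb, zwd_len ha])]
  simp [mwd_len hb, zwd_len ha]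

lemma partC_head? {k : ℕ} (b : P2) : (partC k b).head? = some (mwd k b, []) := by
  rw [partC, head?_append_ne _ _ (tr12_ne_nil _ _), head?_tr12]

lemma route_head? {k : ℕ} (a b : P2) : (route k a b).head? = some a := by
  rw [route, head?_append_ne _ _ (by simp [partA]), head?_append_ne _ _ (by simp [partA])]
  simp [partA]

lemma route_getLast? {k : ℕ} (a b : P2) : (route k a b).getLast? = some b := by
  rw [route, getLast?_append_ne _ _ (by simp [partC]), partC,
    getLast?_append_ne _ _ (by simp), List.getLast?_singleton]

lemma chain'_partA {k : ℕ} {a : P2} (ha : InAnn k a) : List.Chain' LRel (partA k a) := by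
  rw [partA]; apply List.isChain_cons.mpr
  refine ⟨?_, chain'_tr12 _ _ (by simp)⟩
  intro y hy
  rw [head?_tr12, Option.mem_def, Option.some.injEq] at hy
  subst hy
  exact LRel_padk k a

lemma chain'_partC {k : ℕ} {b : P2} (hb : InAnn k b) : List.Chain' LRel (partC k b) := by
  rw [partC]
  refine List.IsChain.append (chain'_tr12 _ _ ?_) (by simp) ?_
  · simp [mwd]
  · intro x hx y hy
    rw [getLast?_tr12 _ _ (by simp [mwd]), Option.mem_def, Option.some.injEq] at hx
    simp only [List.head?_cons, Option.mem_def, Option.some.injEq] at hy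
    subst hx; subst hy
    have h1 : (mwd k b).take ((mwd k b).length - (padk k b).2.length) = (padk k b).1 := by
      rw [mwd_len hb]
      have := padk_len hb
      rw [show k - (padk k b).2.length = (padk k b).1.length by omega]
      rw [mwd, List.take_left' rfl]
    rw [h1]
    simpa using LRel_padk' k b

lemma chain'_route {k : ℕ} {a b : P2} (ha : InAnn k a) (hb : InAnn k b) :
    List.Chain' LRel (route k a b) := by
  rw [route]
  refine List.IsChain.append (List.IsChain.append (chain'_partA ha) ?_ ?_) (chain'_partC hb) ?_
  · exact chain'_tr21 _ _ (by simp [mwd_len hb, zwd_len ha])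
  · intro x hx y hy
    rw [partA_getLast? ha, Option.mem_def, Option.some.injEq] at hx
    rw [partB, head?_tr21, Option.mem_def, Option.some.injEq] at hy
    subst hx; subst hy
    exact LRel.refl _
  · intro x hx y hy
    rw [getLast?_append_ne _ _ (by simp [partB, tr21_ne_nil]), partB_getLast? ha hb,
      Option.mem_def, Option.some.injEq] at hx
    rw [partC_head?, Option.mem_def, Option.some.injEq] at hy
    subst hx; subst hy
    exact LRel.refl _

lemma mem_route_inAnn {k : ℕ} {a b : P2} (ha : InAnn k a) (hb : InAnn k b) :
    ∀ w ∈ route k a b, InAnn k w := by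
  intro w hw
  rw [route] at hw
  simp only [List.mem_append] at hw
  have hpa := padk_len ha
  have hpb := padk_len hb
  rcases hw with (hw | hw) | hw
  · rw [partA, List.mem_cons] at hw
    rcases hw with hw | hw
    · subst hw; exact ha
    · rcases len_tr12 _ _ (by simp) w hw with h | h <;>
        constructor <;> omega
  · rw [partB] at hw
    rcases len_tr21 _ _ (by simp [mwd_len hb, zwd_len ha]) w hw with h | h <;>
      · simp only [List.length_nil, zwd_len ha] at h
        constructor <;> omega
  · rw [partC, List.mem_append, List.mem_singleton] at hw
    rcases hw with hw | hw
    · rcases len_tr12 _ _ (by simp [mwd]) w hw with h | h <;>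
      · simp only [List.length_nil, mwd_len hb] at h
        constructor <;> omega
    · subst hw; exact hb

lemma walk_of_chain {V : Type*} (G : SimpleGraph V) :
    ∀ (l : List V) (a : V), List.Chain (fun x y => x = y ∨ G.Adj x y) a l →
      ∃ p : G.Walk a ((a :: l).getLast (List.cons_ne_nil a l)),
        ∀ w ∈ p.support, w = a ∨ w ∈ l := by
  intro l
  induction l with
  | nil =>
    intro a _
    exact ⟨SimpleGraph.Walk.nil, by simp⟩
  | cons y t ih =>
    intro a hc
    replace hc := List.isChain_cons_cons.mp hc
    obtain ⟨q, hq⟩ := ih y hc.2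
    have hlast : ((a :: y :: t).getLast (List.cons_ne_nil _ _)) =
        ((y :: t).getLast (List.cons_ne_nil _ _)) := List.getLast_cons _
    rcases hc.1 with he | hadj
    · subst he
      refine ⟨q.copy rfl hlast.symm, ?_⟩
      intro w hw
      rw [SimpleGraph.Walk.support_copy] at hw
      rcases hq w hw with h | h
      · exact Or.inl h
      · exact Or.inr (List.mem_cons_of_mem _ h)
    · refine ⟨(SimpleGraph.Walk.cons hadj q).copy rfl hlast.symm, ?_⟩
      intro w hw
      rw [SimpleGraph.Walk.support_copy, SimpleGraph.Walk.support_cons] at hw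
      rcases List.mem_cons.mp hw with hw | hw
      · exact Or.inl hw
      · rcases hq w hw with h | h
        · exact Or.inr (by simp [h])
        · exact Or.inr (List.mem_cons_of_mem _ h)

lemma lrel_to_adj {k : ℕ} {x y : AnnV k} (h : LRel x.1 y.1) :
    x = y ∨ (annGraph k).Adj x y := by
  rcases h with h | h | h
  · exact Or.inl (Subtype.ext h)
  · refine Or.inr ((SimpleGraph.fromRel_adj _ x y).mpr ⟨?_, Or.inl h⟩)
    intro he; exact AnnRel_ne h (by rw [he])
  · refine Or.inr ((SimpleGraph.fromRel_adj _ x y).mpr ⟨?_, Or.inr h⟩)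
    intro he; exact AnnRel_ne h (by rw [he])

lemma reach_of_route {k : ℕ} (S : Set (AnnV k)) (a b : AnnV k)
    (hav : ∀ s ∈ S, s.1 ∉ route k a.1 b.1) : ReachAvoid S a b := by
  classical
  have ha : InAnn k a.1 := a.2
  have hb : InAnn k b.1 := b.2
  set l := route k a.1 b.1 with hl
  have hmem : ∀ p ∈ l, InAnn k p := mem_route_inAnn ha hb
  set lA : List (AnnV k) := l.pmap (fun p hp => (⟨p, hp⟩ : AnnV k)) hmem with hlA
  have hmap : lA.map Subtype.val = l := by
    rw [hlA]
    exact (List.map_pmap _).trans ((List.pmap_eq_map _).trans (List.map_id _))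
  have hchain : List.Chain' (fun x y : AnnV k => x = y ∨ (annGraph k).Adj x y) lA := by
    have h0 : List.Chain' LRel (lA.map Subtype.val) := by
      rw [hmap]; exact chain'_route ha hb
    replace h0 := (List.isChain_map Subtype.val).mp h0
    exact h0.imp (fun x y h => lrel_to_adj h)
  have hne : lA ≠ [] := by
    intro h0
    have : l = [] := by rw [← hmap, h0]; rfl
    have := route_head? (k := k) a.1 b.1
    rw [← hl, ‹l = []›] at this
    simp at this
  obtain ⟨A, rest, hAr⟩ := List.exists_cons_of_ne_nil hne
  have hchain2 : List.Chain (fun x y : AnnV k => x = y ∨ (annGraph k).Adj x y) A rest := by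
    rw [hAr] at hchain; exact hchain
  obtain ⟨p, hp⟩ := walk_of_chain (annGraph k) rest A hchain2
  have hA : A = a := by
    apply Subtype.ext
    have h1 : (lA.map Subtype.val).head? = some A.1 := by
      rw [hAr]; rfl
    rw [hmap, hl, route_head?] at h1
    exact ((Option.some.injEq _ _).mp h1.symm)
  have hB : (A :: rest).getLast (List.cons_ne_nil _ _) = b := by
    apply Subtype.ext
    have h1 : (lA.map Subtype.val).getLast? =
        some ((A :: rest).getLast (List.cons_ne_nil _ _)).1 := by
      rw [hAr]
      exact List.getLast?_map.trans (congrArg (Option.map _) (List.getLast?_eq_getLast (List.cons_ne_nil _ _)))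
    rw [hmap, hl, route_getLast?] at h1
    exact ((Option.some.injEq _ _).mp h1).symm
  refine ⟨(p.copy hA hB), ?_⟩
  intro w hw
  rw [SimpleGraph.Walk.support_copy] at hw
  have hwl : w ∈ lA := by
    rcases hp w hw with h | h
    · rw [h, hAr]; exact List.mem_cons_self
    · rw [hAr]; exact List.mem_cons_of_mem _ h
  have : w.1 ∈ l := by
    rw [← hmap]
    exact List.mem_map_of_mem (f := Subtype.val) hwl
  intro hwS
  exact hav w hwS this

instance AnnV.finite (k : ℕ) : Finite (AnnV k) := by
  have h1 : {l : List Bool | l.length ≤ k}.Finite := List.finite_length_le Bool k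
  have i1 : Finite {l : List Bool | l.length ≤ k} := h1.to_subtype
  refine Finite.of_injective (fun A : AnnV k =>
    ((⟨A.1.1, by have := A.2.2; simp only [Set.mem_setOf_eq]; omega⟩ :
        {l : List Bool | l.length ≤ k}),
     (⟨A.1.2, by have := A.2.2; simp only [Set.mem_setOf_eq]; omega⟩ :
        {l : List Bool | l.length ≤ k}))) ?_
  intro A B h
  rw [Prod.ext_iff] at h
  obtain ⟨h1', h2'⟩ := h
  apply Subtype.ext
  exact Prod.ext (congrArg Subtype.val h1') (congrArg Subtype.val h2')

noncomputable instance AnnV.fintype (k : ℕ) : Fintype (AnnV k) := Fintype.ofFinite _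

lemma annV_card_lb (k : ℕ) : (k + 1) * 2 ^ k ≤ Nat.card (AnnV k) := by
  classical
  have hf : Function.Injective (fun q : Fin (k+1) × List.Vector Bool k =>
      (⟨(q.2.1.take q.1.1, q.2.1.drop q.1.1), by
        constructor <;> simp only [List.length_take, List.length_drop, q.2.2] <;> omega⟩ :
        AnnV k)) := by
    intro q q' h
    have h1 : q.2.1.take q.1.1 = q'.2.1.take q'.1.1 := congrArg (fun A : AnnV k => A.1.1) h
    have h2 : q.2.1.drop q.1.1 = q'.2.1.drop q'.1.1 := congrArg (fun A : AnnV k => A.1.2) h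
    have hm : q.1 = q'.1 := by
      have := congrArg List.length h1
      simp only [List.length_take, q.2.2, q'.2.2] at this
      have hq := q.1.2
      have hq' := q'.1.2
      apply Fin.ext
      omega
    have hw : q.2 = q'.2 := by
      apply Subtype.ext
      rw [← List.take_append_drop q.1.1 q.2.1, h1, h2, List.take_append_drop]
    exact Prod.ext hm hw
  have := Nat.card_le_card_of_injective
    (α := Fin (k+1) × List.Vector Bool k) (β := AnnV k) _ hf
  rwa [Nat.card_prod, Nat.card_eq_fintype_card, Nat.card_eq_fintype_card,
    Fintype.card_fin, card_vector, Fintype.card_bool] at this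

lemma ncard_le_of_cover {α β : Type*} [Fintype β] (s : Set α) (g : β → α)
    (h : ∀ a ∈ s, ∃ i, g i = a) : s.ncard ≤ Fintype.card β := by
  classical
  have hsub : s ⊆ Set.range g := fun a ha => (h a ha).imp fun i hi => hi
  calc s.ncard ≤ (Set.range g).ncard := Set.ncard_le_ncard hsub (Set.finite_range g)
    _ = (g '' Set.univ).ncard := by rw [Set.image_univ]
    _ ≤ (Set.univ : Set β).ncard := Set.ncard_image_le Set.finite_univ
    _ = Nat.card β := Set.ncard_univ β
    _ = Fintype.card β := Nat.card_eq_fintype_card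

instance InAnn.decidable (k : ℕ) (p : P2) : Decidable (InAnn k p) := by
  unfold InAnn; infer_instance

def annDefault (k : ℕ) : AnnV k := ⟨([], List.replicate k false), by simp⟩

def toAnn (k : ℕ) (p : P2) : AnnV k :=
  if h : InAnn k p then ⟨p, h⟩ else annDefault k

lemma toAnn_val {k : ℕ} (A : AnnV k) : toAnn k A.1 = A := by
  have hA : InAnn k A.1 := A.2
  rw [toAnn]; refine (dif_pos hA).trans ?_
  exact Subtype.ext rfl

def unpad (e : Bool) (p : P2) : P2 := if e then p else (p.1, p.2.dropLast)

lemma unpad_padk (k : ℕ) (p : P2) : ∃ e, unpad e (padk k p) = p := by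
  unfold padk
  split_ifs with h
  · exact ⟨true, rfl⟩
  · exact ⟨false, by simp [unpad, List.dropLast_concat]⟩

def setA (k : ℕ) (sr : P2) : Set (AnnV k) := {A | sr ∈ partA k A.1}
def setC (k : ℕ) (sr : P2) : Set (AnnV k) := {B | sr ∈ partC k B.1}
def setB1 (k : ℕ) (sr : P2) : Set (AnnV k) := {A | sr.2 <+: zwd k A.1}
def setB2 (k : ℕ) (sr : P2) : Set (AnnV k) := {B | sr.1 <+: mwd k B.1}

lemma setA_card (k : ℕ) (sr : P2) : (setA k sr).ncard ≤ 9 * (k + 1) := by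
  classical
  have h := ncard_le_of_cover (β := Option (Fin (k+1) × Bool × Bool × Bool)) (setA k sr)
    (fun i => match i with
      | none => toAnn k sr
      | some (m, t, x, e) => toAnn k (unpad e (decA sr m.1 t x))) ?_
  · rw [Fintype.card_option, Fintype.card_prod, Fintype.card_prod, Fintype.card_prod,
      Fintype.card_fin, Fintype.card_bool] at h
    omega
  · intro A hA
    rw [setA, Set.mem_setOf_eq, partA, List.mem_cons] at hA
    rcases hA with hA | hA
    · refine ⟨none, ?_⟩
      show toAnn k sr = A
      rw [hA]; exact toAnn_val A
    · obtain ⟨t, x, heq⟩ := decode_A ((padk k A.1).1.reverse) ((padk k A.1).1)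
        ((padk k A.1).2) sr rfl (by exact hA)
      obtain ⟨e, he⟩ := unpad_padk k A.1
      have hm : (padk k A.1).2.length < k + 1 := by
        have := padk_len (A.2 : InAnn k A.1); omega
      refine ⟨some (⟨(padk k A.1).2.length, hm⟩, t, x, e), ?_⟩
      show toAnn k (unpad e (decA sr (padk k A.1).2.length t x)) = A
      rw [← heq]
      rw [show ((padk k A.1).1, (padk k A.1).2) = padk k A.1 from rfl, he]
      exact toAnn_val A

lemma setC_card (k : ℕ) (sr : P2) : (setC k sr).ncard ≤ 9 * (k + 1) := by
  classical
  have h := ncard_le_of_cover (β := Option (Fin (k+1) × Bool × Bool × Bool)) (setC k sr)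
    (fun i => match i with
      | none => toAnn k sr
      | some (m, t, x, e) => toAnn k (unpad e (decC sr m.1 t x))) ?_
  · rw [Fintype.card_option, Fintype.card_prod, Fintype.card_prod, Fintype.card_prod,
      Fintype.card_fin, Fintype.card_bool] at h
    omega
  · intro B hB
    rw [setC, Set.mem_setOf_eq, partC, List.mem_append, List.mem_singleton] at hB
    rcases hB with hB | hB
    · obtain ⟨t, x, heq⟩ := decode_C ((padk k B.1).2) (mwd k B.1) [] sr (padk k B.1).1 rfl hB
      rw [List.nil_append] at heq
      obtain ⟨e, he⟩ := unpad_padk k B.1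
      have hm : (padk k B.1).1.length < k + 1 := by
        have := padk_len (B.2 : InAnn k B.1); omega
      refine ⟨some (⟨(padk k B.1).1.length, hm⟩, t, x, e), ?_⟩
      show toAnn k (unpad e (decC sr (padk k B.1).1.length t x)) = B
      rw [← heq]
      rw [show ((padk k B.1).1, (padk k B.1).2) = padk k B.1 from rfl, he]
      exact toAnn_val B
    · refine ⟨none, ?_⟩
      show toAnn k sr = B
      rw [hB]; exact toAnn_val B

lemma setB1_card (k : ℕ) (sr : P2) :
    (setB1 k sr).ncard ≤ 2 ^ (k - sr.2.length) * (2 * (k + 1)) := by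
  classical
  have h := ncard_le_of_cover
    (β := List.Vector Bool (k - sr.2.length) × Fin (k+1) × Bool) (setB1 k sr)
    (fun q => toAnn k (unpad q.2.2
      (((sr.2 ++ q.1.1).drop q.2.1.1).reverse, (sr.2 ++ q.1.1).take q.2.1.1))) ?_
  · rw [Fintype.card_prod, Fintype.card_prod, Fintype.card_fin, Fintype.card_bool,
      card_vector, Fintype.card_bool] at h
    calc (setB1 k sr).ncard ≤ 2 ^ (k - sr.2.length) * ((k+1) * 2) := h
      _ = 2 ^ (k - sr.2.length) * (2 * (k + 1)) := by ring
  · intro A hA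
    rw [setB1, Set.mem_setOf_eq] at hA
    obtain ⟨w0, hw0⟩ := hA
    have hz := zwd_len (A.2 : InAnn k A.1)
    have hw0len : w0.length = k - sr.2.length := by
      have := congrArg List.length hw0
      simp only [List.length_append] at this
      omega
    have hpl := padk_len (A.2 : InAnn k A.1)
    have hm : (padk k A.1).2.length < k + 1 := by omega
    obtain ⟨e, he⟩ := unpad_padk k A.1
    refine ⟨(⟨w0, hw0len⟩, ⟨(padk k A.1).2.length, hm⟩, e), ?_⟩
    show toAnn k (unpad e (((sr.2 ++ w0).drop (padk k A.1).2.length).reverse,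
      (sr.2 ++ w0).take (padk k A.1).2.length)) = A
    rw [hw0]
    rw [show zwd k A.1 = (padk k A.1).2 ++ (padk k A.1).1.reverse from rfl]
    rw [List.take_left' rfl, List.drop_left' rfl, List.reverse_reverse]
    rw [show (((padk k A.1).1, (padk k A.1).2) : P2) = padk k A.1 from rfl]
    rw [he]
    exact toAnn_val A

lemma setB2_card (k : ℕ) (sr : P2) :
    (setB2 k sr).ncard ≤ 2 ^ (k - sr.1.length) * (2 * (k + 1)) := by
  classical
  have h := ncard_le_of_cover
    (β := List.Vector Bool (k - sr.1.length) × Fin (k+1) × Bool) (setB2 k sr)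
    (fun q => toAnn k (unpad q.2.2
      ((sr.1 ++ q.1.1).take q.2.1.1, ((sr.1 ++ q.1.1).drop q.2.1.1).reverse))) ?_
  · rw [Fintype.card_prod, Fintype.card_prod, Fintype.card_fin, Fintype.card_bool,
      card_vector, Fintype.card_bool] at h
    calc (setB2 k sr).ncard ≤ 2 ^ (k - sr.1.length) * ((k+1) * 2) := h
      _ = 2 ^ (k - sr.1.length) * (2 * (k + 1)) := by ring
  · intro B hB
    rw [setB2, Set.mem_setOf_eq] at hB
    obtain ⟨w0, hw0⟩ := hB
    have hz := mwd_len (B.2 : InAnn k B.1)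
    have hw0len : w0.length = k - sr.1.length := by
      have := congrArg List.length hw0
      simp only [List.length_append] at this
      omega
    have hpl := padk_len (B.2 : InAnn k B.1)
    have hm : (padk k B.1).1.length < k + 1 := by omega
    obtain ⟨e, he⟩ := unpad_padk k B.1
    refine ⟨(⟨w0, hw0len⟩, ⟨(padk k B.1).1.length, hm⟩, e), ?_⟩
    show toAnn k (unpad e ((sr.1 ++ w0).take (padk k B.1).1.length,
      ((sr.1 ++ w0).drop (padk k B.1).1.length).reverse)) = B
    rw [hw0]
    rw [show mwd k B.1 = (padk k B.1).1 ++ (padk k B.1).2.reverse from rfl]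
    rw [List.take_left' rfl, List.drop_left' rfl, List.reverse_reverse]
    rw [show (((padk k B.1).1, (padk k B.1).2) : P2) = padk k B.1 from rfl]
    rw [he]
    exact toAnn_val B

lemma route_split {k : ℕ} {s a b : AnnV k} (h : s.1 ∈ route k a.1 b.1) :
    a ∈ setA k s.1 ∨ (a ∈ setB1 k s.1 ∧ b ∈ setB2 k s.1) ∨ b ∈ setC k s.1 := by
  rw [route, List.mem_append, List.mem_append] at h
  rcases h with (h | h) | h
  · exact Or.inl h
  · right; left
    have hd := decode_B (mwd k b.1) [] (zwd k a.1) s.1 (zwd k a.1)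
      (List.prefix_refl _) (by exact h)
    exact ⟨hd.2, by have h1 := hd.1; simp only [List.nil_append] at h1; exact h1⟩
  · exact Or.inr (Or.inr h)

lemma cnt_bound {k : ℕ} (s a : AnnV k) [DecidablePred (· ∈ setA k s.1)]
    [DecidablePred (· ∈ setB1 k s.1)] :
    {b : AnnV k | s.1 ∈ route k a.1 b.1}.ncard ≤
      (if a ∈ setA k s.1 then Nat.card (AnnV k) else 0) + (setC k s.1).ncard +
      (if a ∈ setB1 k s.1 then (setB2 k s.1).ncard else 0) := by
  by_cases h1 : a ∈ setA k s.1
  · rw [if_pos h1]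
    have hle : {b : AnnV k | s.1 ∈ route k a.1 b.1}.ncard ≤ Nat.card (AnnV k) := by
      rw [← Set.ncard_univ]
      exact Set.ncard_le_ncard (Set.subset_univ _) Set.finite_univ
    omega
  · rw [if_neg h1]
    by_cases h2 : a ∈ setB1 k s.1
    · rw [if_pos h2]
      have hsub : {b : AnnV k | s.1 ∈ route k a.1 b.1} ⊆ setC k s.1 ∪ setB2 k s.1 := by
        intro b hb
        rcases route_split hb with h | ⟨_, hb2⟩ | h
        · exact absurd h h1
        · exact Or.inr hb2
        · exact Or.inl h
      have hA := Set.ncard_le_ncard hsub (Set.toFinite _)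
      have hB := Set.ncard_union_le (setC k s.1) (setB2 k s.1)
      omega
    · rw [if_neg h2]
      have hsub : {b : AnnV k | s.1 ∈ route k a.1 b.1} ⊆ setC k s.1 := by
        intro b hb
        rcases route_split hb with h | ⟨hb1, _⟩ | h
        · exact absurd h h1
        · exact absurd hb1 h2
        · exact h
      have hA := Set.ncard_le_ncard hsub (Set.toFinite _)
      omega

lemma sum_cnt (k : ℕ) (s : AnnV k) :
    ∑ a : AnnV k, {b : AnnV k | s.1 ∈ route k a.1 b.1}.ncard ≤
      26 * (k + 1) * Nat.card (AnnV k) := by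
  classical
  set N := Nat.card (AnnV k) with hN
  have step1 : ∑ a : AnnV k, {b : AnnV k | s.1 ∈ route k a.1 b.1}.ncard ≤
      ∑ a : AnnV k, ((if a ∈ setA k s.1 then N else 0) + (setC k s.1).ncard +
        (if a ∈ setB1 k s.1 then (setB2 k s.1).ncard else 0)) :=
    Finset.sum_le_sum fun a _ => cnt_bound s a
  have hsum1 : ∑ a : AnnV k, (if a ∈ setA k s.1 then N else 0) =
      (setA k s.1).ncard * N := by
    rw [← Finset.sum_filter, Finset.sum_const, Set.filter_mem_univ_eq_toFinset,
      ← Set.ncard_eq_toFinset_card', smul_eq_mul]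
  have hsum2 : ∑ _a : AnnV k, (setC k s.1).ncard = N * (setC k s.1).ncard := by
    rw [Finset.sum_const, Finset.card_univ, smul_eq_mul, hN, Nat.card_eq_fintype_card]
  have hsum3 : ∑ a : AnnV k, (if a ∈ setB1 k s.1 then (setB2 k s.1).ncard else 0) =
      (setB1 k s.1).ncard * (setB2 k s.1).ncard := by
    rw [← Finset.sum_filter, Finset.sum_const, Set.filter_mem_univ_eq_toFinset,
      ← Set.ncard_eq_toFinset_card', smul_eq_mul]
  have hBB : (setB1 k s.1).ncard * (setB2 k s.1).ncard ≤ 8 * (k + 1) * N := by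
    have h1 := setB1_card k s.1
    have h2 := setB2_card k s.1
    have hcal : (setB1 k s.1).ncard * (setB2 k s.1).ncard ≤
        (2 ^ (k - s.1.2.length) * (2 * (k + 1))) * (2 ^ (k - s.1.1.length) * (2 * (k + 1))) :=
      Nat.mul_le_mul h1 h2
    have hexp : (k - s.1.2.length) + (k - s.1.1.length) ≤ k + 1 := by
      have hs := s.2
      omega
    have hpow : 2 ^ (k - s.1.2.length) * 2 ^ (k - s.1.1.length) ≤ 2 ^ (k + 1) := by
      rw [← pow_add]
      exact Nat.pow_le_pow_right (by norm_num) hexp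
    calc (setB1 k s.1).ncard * (setB2 k s.1).ncard
        ≤ (2 ^ (k - s.1.2.length) * (2 * (k + 1))) * (2 ^ (k - s.1.1.length) * (2 * (k + 1))) :=
          hcal
      _ = (2 ^ (k - s.1.2.length) * 2 ^ (k - s.1.1.length)) * (4 * (k + 1) * (k + 1)) := by ring
      _ ≤ 2 ^ (k + 1) * (4 * (k + 1) * (k + 1)) := Nat.mul_le_mul_right _ hpow
      _ = 8 * (k + 1) * ((k + 1) * 2 ^ k) := by ring
      _ ≤ 8 * (k + 1) * N := Nat.mul_le_mul_left _ (annV_card_lb k)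
  calc ∑ a : AnnV k, {b : AnnV k | s.1 ∈ route k a.1 b.1}.ncard
      ≤ ∑ a : AnnV k, ((if a ∈ setA k s.1 then N else 0) + (setC k s.1).ncard +
        (if a ∈ setB1 k s.1 then (setB2 k s.1).ncard else 0)) := step1
    _ = (setA k s.1).ncard * N + N * (setC k s.1).ncard +
        (setB1 k s.1).ncard * (setB2 k s.1).ncard := by
        rw [Finset.sum_add_distrib, Finset.sum_add_distrib, hsum1, hsum2, hsum3]
    _ ≤ (9 * (k+1)) * N + N * (9 * (k+1)) + 8 * (k + 1) * N := by
        have h1 := setA_card k s.1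
        have h2 := setC_card k s.1
        have hle1 : (setA k s.1).ncard * N ≤ 9 * (k+1) * N := Nat.mul_le_mul_right _ h1
        have hle2 : N * (setC k s.1).ncard ≤ N * (9 * (k+1)) := Nat.mul_le_mul_left _ h2
        omega
    _ = 26 * (k + 1) * N := by ring

lemma ncard_biUnion_le' {α β : Type*} [Finite α] (F : Finset β) (f : β → Set α) :
    (⋃ b ∈ F, f b).ncard ≤ ∑ b ∈ F, (f b).ncard := by
  classical
  induction F using Finset.induction with
  | empty => simp
  | @insert a F ha ih =>
    rw [Finset.set_biUnion_insert, Finset.sum_insert ha]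
    exact (Set.ncard_union_le _ _).trans (Nat.add_le_add_left ih _)


/-- There is `C > 0` such that, for every `k ≥ 1`, every `(1, 15/16)`-cut `S` of the
annulus `A_k` — i.e. every set `S` of vertices such that each connected component of
`A_k` minus `S` has at most `(15/16)·#V(A_k)` vertices — satisfies `#S ≥ C·2^k`. -/
theorem annulus_cut_lower_bound :
    ∃ C > (0 : ℝ), ∀ k : ℕ, 1 ≤ k → ∀ S : Set (AnnV k),
      (∀ u : AnnV k, u ∉ S →
        (({v : AnnV k | ReachAvoid S u v}).ncard : ℝ) ≤
          (15 / 16 : ℝ) * (Nat.card (AnnV k) : ℝ)) →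
      C * 2 ^ k ≤ (S.ncard : ℝ) := by
  classical
  refine ⟨1 / 2000, by norm_num, ?_⟩
  intro k hk S hcut
  set N := Nat.card (AnnV k) with hNdef
  set σ := S.ncard with hσdef
  have hS : S.Finite := Set.toFinite S
  set F : Finset (AnnV k) := hS.toFinset with hFdef
  have hFcard : F.card = σ := (Set.ncard_eq_toFinset_card S hS).symm
  have hσN : σ ≤ N := by
    rw [hσdef, hNdef, ← Set.ncard_univ]
    exact Set.ncard_le_ncard (Set.subset_univ _) Set.finite_univ
  set Bad : AnnV k → Set (AnnV k) := fun a => {b | b ∉ S ∧ ¬ReachAvoid S a b} with hBdef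
  -- per-vertex lower bound on the number of unreachable vertices, over ℝ
  have key1 : ∀ a : AnnV k, a ∉ S →
      (N : ℝ) / 16 - σ ≤ ((Bad a).ncard : ℝ) := by
    intro a haS
    have hcover : (Set.univ : Set (AnnV k)) ⊆
        ({v | ReachAvoid S a v} ∪ S) ∪ Bad a := by
      intro b _
      by_cases h1 : ReachAvoid S a b
      · exact Or.inl (Or.inl h1)
      · by_cases h2 : b ∈ S
        · exact Or.inl (Or.inr h2)
        · exact Or.inr ⟨h2, h1⟩
    have hN1 : N ≤ {v | ReachAvoid S a v}.ncard + σ + (Bad a).ncard := by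
      calc N = (Set.univ : Set (AnnV k)).ncard := (Set.ncard_univ _).symm
        _ ≤ (({v | ReachAvoid S a v} ∪ S) ∪ Bad a).ncard :=
          Set.ncard_le_ncard hcover (Set.toFinite _)
        _ ≤ ({v | ReachAvoid S a v} ∪ S).ncard + (Bad a).ncard :=
          Set.ncard_union_le _ _
        _ ≤ {v | ReachAvoid S a v}.ncard + σ + (Bad a).ncard := by
          have := Set.ncard_union_le {v | ReachAvoid S a v} S
          omega
    have hR := hcut a haS
    have hcast : (N : ℝ) ≤ ({v | ReachAvoid S a v}.ncard : ℝ) + σ + ((Bad a).ncard : ℝ) := by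
      exact_mod_cast hN1
    linarith
  -- counting bound
  have key2 : ∀ a : AnnV k, a ∉ S →
      (Bad a).ncard ≤ ∑ s ∈ F, {b : AnnV k | s.1 ∈ route k a.1 b.1}.ncard := by
    intro a haS
    have hsub : Bad a ⊆ ⋃ s ∈ F, {b : AnnV k | s.1 ∈ route k a.1 b.1} := by
      intro b hb
      by_contra hnot
      simp only [Set.mem_iUnion, not_exists, Set.mem_setOf_eq] at hnot
      have hav : ∀ s ∈ S, s.1 ∉ route k a.1 b.1 := by
        intro s hsS hsr
        exact hnot s (hS.mem_toFinset.mpr hsS) hsr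
      exact hb.2 (reach_of_route S a b hav)
    exact (Set.ncard_le_ncard hsub (Set.toFinite _)).trans (ncard_biUnion_le' F _)
  set goodF : Finset (AnnV k) := Finset.univ \ F with hgdef
  have hgood_mem : ∀ a ∈ goodF, a ∉ S := by
    intro a ha
    rw [hgdef, Finset.mem_sdiff] at ha
    exact fun h => ha.2 (hS.mem_toFinset.mpr h)
  have hgcard : goodF.card = N - σ := by
    rw [hgdef, Finset.card_sdiff_of_subset (Finset.subset_univ _), Finset.card_univ, hFcard,
      hNdef, Nat.card_eq_fintype_card]
  -- total (ℕ) bound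
  have htotal : ∑ a ∈ goodF, (Bad a).ncard ≤ σ * (26 * (k + 1) * N) := by
    calc ∑ a ∈ goodF, (Bad a).ncard
        ≤ ∑ a ∈ goodF, ∑ s ∈ F, {b : AnnV k | s.1 ∈ route k a.1 b.1}.ncard :=
          Finset.sum_le_sum fun a ha => key2 a (hgood_mem a ha)
      _ ≤ ∑ a : AnnV k, ∑ s ∈ F, {b : AnnV k | s.1 ∈ route k a.1 b.1}.ncard :=
          Finset.sum_le_sum_of_subset (Finset.subset_univ _)
      _ = ∑ s ∈ F, ∑ a : AnnV k, {b : AnnV k | s.1 ∈ route k a.1 b.1}.ncard :=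
          Finset.sum_comm
      _ ≤ ∑ _s ∈ F, 26 * (k + 1) * N := Finset.sum_le_sum fun s _ => sum_cnt k s
      _ = σ * (26 * (k + 1) * N) := by rw [Finset.sum_const, hFcard, smul_eq_mul]
  -- ℝ master inequality
  have hmaster : ((N : ℝ) - σ) * ((N : ℝ) / 16 - σ) ≤ σ * (26 * ((k : ℝ) + 1) * N) := by
    have h1 : ((N : ℝ) - σ) * ((N : ℝ) / 16 - σ) =
        ∑ _a ∈ goodF, ((N : ℝ) / 16 - σ) := by
      rw [Finset.sum_const, hgcard, nsmul_eq_mul, Nat.cast_sub hσN]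
    have h2 : ∑ _a ∈ goodF, ((N : ℝ) / 16 - (σ : ℝ)) ≤ ∑ a ∈ goodF, ((Bad a).ncard : ℝ) :=
      Finset.sum_le_sum fun a ha => key1 a (hgood_mem a ha)
    have h3 : ∑ a ∈ goodF, (((Bad a).ncard : ℕ) : ℝ) ≤ (σ : ℝ) * (26 * ((k : ℝ) + 1) * N) := by
      rw [← Nat.cast_sum]
      calc ((∑ a ∈ goodF, (Bad a).ncard : ℕ) : ℝ) ≤ ((σ * (26 * (k + 1) * N) : ℕ) : ℝ) := by
            exact_mod_cast htotal
        _ = (σ : ℝ) * (26 * ((k : ℝ) + 1) * N) := by push_cast; ring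
    linarith
  -- numeric endgame
  have hNlb : ((k : ℝ) + 1) * 2 ^ k ≤ (N : ℝ) := by
    have := annV_card_lb k
    calc ((k : ℝ) + 1) * 2 ^ k = (((k + 1) * 2 ^ k : ℕ) : ℝ) := by push_cast; ring
      _ ≤ (N : ℝ) := by exact_mod_cast this
  have hP0 : (0 : ℝ) < 2 ^ k := by positivity
  have hK0 : (0 : ℝ) < (k : ℝ) + 1 := by positivity
  have hn0 : (0 : ℝ) < N := lt_of_lt_of_le (by positivity) hNlb
  have hσ0 : (0 : ℝ) ≤ σ := Nat.cast_nonneg _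
  by_cases hcase : (N : ℝ) / 32 ≤ (σ : ℝ)
  · have : (2 : ℝ) ^ k ≤ (N : ℝ) := le_trans (by nlinarith) hNlb
    linarith
  · push_neg at hcase
    have h1 : (31 / 32 : ℝ) * N ≤ (N : ℝ) - σ := by linarith
    have h2 : (N : ℝ) / 32 ≤ (N : ℝ) / 16 - σ := by linarith
    have hprod : ((31 / 32 : ℝ) * N) * ((N : ℝ) / 32) ≤
        ((N : ℝ) - σ) * ((N : ℝ) / 16 - σ) :=
      mul_le_mul h1 h2 (by linarith) (by linarith)
    have hmain2 : (31 / 1024 : ℝ) * N * N ≤ σ * (26 * ((k : ℝ) + 1) * N) := by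
      nlinarith
    have hdiv : (31 : ℝ) * N ≤ 26624 * (((k : ℝ) + 1) * σ) := by
      have h' : (N : ℝ) * (31 * N) ≤ (N : ℝ) * (26624 * (((k : ℝ) + 1) * σ)) := by
        nlinarith
      exact le_of_mul_le_mul_left h' hn0
    have hdiv2 : (31 : ℝ) * 2 ^ k ≤ 26624 * σ := by
      have h'' : ((k : ℝ) + 1) * (31 * 2 ^ k) ≤ ((k : ℝ) + 1) * (26624 * σ) := by
        nlinarith
      exact le_of_mul_le_mul_left h'' hK0
    linarith
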